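/- Assume v ≠ 0, and let s* ∈ {0,1,...,K} be the unique index such that S_λ̄(|U_(s*+1)|) ≤ M‖b_{s*}‖₂ < S_λ̄(|U_(s*)|). Then for every s ∈ {0,1,...,K}: if s < s*, the function f is strictly increasing on the interval [S_λ̄(|U_(s+1)|), S_λ̄(|U_(s)|)) (intersected with [0,∞)), and if s > s*, f is strictly decreasing on that interval. -/

import Mathlib

/-- Soft-thresholding operator `S_t(x) = sign(x) · max(|x| − t, 0)`. -/
noncomputable def st (t x : ℝ) : ℝ := Real.sign x * max (|x| - t) 0

/-- Euclidean (ℓ₂) norm on `ℝ^n`. -/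
noncomputable def l2 {n : ℕ} (x : Fin n → ℝ) : ℝ := Real.sqrt (∑ i, (x i) ^ 2)

/-- ℓ₁ norm on `ℝ^n`. -/
noncomputable def l1 {n : ℕ} (x : Fin n → ℝ) : ℝ := ∑ i, |x i|

/-- `du U σ s = |U_(s)|`, the `s`-th largest absolute entry of `U` (1-based, via a sorting
permutation `σ`), with the out-of-range convention `|U_(s)| = 0` for `s > K`
(so that `S_λ̄(|U_(K+1)|) = 0`). -/
noncomputable def du {K : ℕ} (U : Fin K → ℝ) (σ : Equiv.Perm (Fin K)) (s : ℕ) : ℝ :=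
  if h : s - 1 < K then |U (σ ⟨s - 1, h⟩)| else 0

/-- `a_s = λ − M·Σ_{i=1}^s (|U_(i)| − λ̄)`. -/
noncomputable def aseq {K : ℕ} (U : Fin K → ℝ) (σ : Equiv.Perm (Fin K))
    (lam lamb M : ℝ) (s : ℕ) : ℝ :=
  lam - M * ∑ i ∈ Finset.Icc 1 s, (du U σ i - lamb)

/-- `b_s = (1/(1+sM²)) · max{1 − a_s/‖v‖₂, 0} · v`. -/
noncomputable def bvec {k K : ℕ} (U : Fin K → ℝ) (σ : Equiv.Perm (Fin K))
    (lam lamb M : ℝ) (v : Fin k → ℝ) (s : ℕ) : Fin k → ℝ :=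
  fun i => (1 / (1 + (s : ℝ) * M ^ 2)) * max (1 - aseq U σ lam lamb M s / l2 v) 0 * v i

/-- `W(b)_j = sign(U_j)·min{M‖b‖₂, S_λ̄(|U_j|)}`. -/
noncomputable def Wmap {k K : ℕ} (lamb M : ℝ) (U : Fin K → ℝ) (b : Fin k → ℝ) :
    Fin K → ℝ :=
  fun j => Real.sign (U j) * min (M * l2 b) (st lamb (abs (U j)))

/-- `F(b) = ½‖v − b‖₂² + ½‖U − W(b)‖₂² + λ‖b‖₂ + λ̄‖W(b)‖₁`. -/
noncomputable def Ffun {k K : ℕ} (lam lamb M : ℝ) (v : Fin k → ℝ) (U : Fin K → ℝ)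
    (b : Fin k → ℝ) : ℝ :=
  (1 / 2) * ∑ i, (v i - b i) ^ 2
    + (1 / 2) * ∑ j, (U j - Wmap lamb M U b j) ^ 2
    + lam * l2 b + lamb * l1 (Wmap lamb M U b)

/-- `f(w) = min{ F(b) : b ∈ ℝ^k, M‖b‖₂ = w }` (as an infimum). -/
noncomputable def fmin {k K : ℕ} (lam lamb M : ℝ) (v : Fin k → ℝ) (U : Fin K → ℝ)
    (w : ℝ) : ℝ :=
  sInf (Ffun lam lamb M v U '' {b : Fin k → ℝ | M * l2 b = w})

/-!
For `w ≥ 0` the constraint `M‖b‖₂ = w` fixes every term of `F(b)` except `½‖v - b‖₂²`, which is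
minimised by the multiple of `v` of norm `w / M`; hence
`f(w) = ½(‖v‖₂ - w/M)² + λ w/M + Σ_j φ(|U_j|, w)` for an explicit one-dimensional cost `φ`.
On the piece `[S_λ̄(|U_(s+1)|), S_λ̄(|U_(s)|))` exactly the `s` largest entries of `U` are not
saturated, so there `f` is a quadratic with leading coefficient `(1 + sM²)/(2M²)` and vertex
`c_s = M(‖v‖₂ - a_s)/(1 + sM²)`, whose positive part is `M‖b_s‖₂`. Since `c_{s+1}` is a weighted
mean of `c_s` and `|U_(s+1)| - λ̄`, an induction away from `s*` shows that the vertex lies to the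
left of the piece when `s < s*` and to its right when `s > s*`.
-/

@[simp] lemma st_zero (t : ℝ) : st t 0 = 0 := by simp [st]

lemma st_of_pos {t x : ℝ} (hx : 0 < x) : st t x = max (x - t) 0 := by
  rw [st, Real.sign_of_pos hx, abs_of_pos hx, one_mul]

lemma st_nonneg {t x : ℝ} (hx : 0 ≤ x) : 0 ≤ st t x := by
  rcases hx.eq_or_lt with rfl | hx
  · simp
  · exact st_of_pos hx ▸ le_max_right _ _

lemma st_mono {t x y : ℝ} (hx : 0 ≤ x) (hxy : x ≤ y) : st t x ≤ st t y := by
  rcases hx.eq_or_lt with rfl | hx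
  · simpa using st_nonneg hxy
  · rw [st_of_pos hx, st_of_pos (hx.trans_le hxy)]
    exact max_le_max (by linarith) le_rfl

lemma st_eq_sub_of_pos {t x : ℝ} (hx : 0 ≤ x) (h : 0 < st t x) : st t x = x - t := by
  rcases hx.eq_or_lt with rfl | hx
  · simp at h
  · rw [st_of_pos hx] at h ⊢
    exact max_eq_left (by rcases lt_max_iff.mp h with h | h <;> linarith)

lemma l2_eq_norm {n : ℕ} (x : Fin n → ℝ) : l2 x = ‖WithLp.toLp 2 x‖ := by
  simp [l2, EuclideanSpace.norm_eq]

lemma l2_sq {n : ℕ} (x : Fin n → ℝ) : l2 x ^ 2 = ∑ i, x i ^ 2 :=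
  Real.sq_sqrt (by positivity)

lemma l2_nonneg {n : ℕ} (x : Fin n → ℝ) : 0 ≤ l2 x := Real.sqrt_nonneg _

lemma l2_smul {n : ℕ} (c : ℝ) (x : Fin n → ℝ) : l2 (c • x) = |c| * l2 x := by
  rw [l2_eq_norm, l2_eq_norm, WithLp.toLp_smul, norm_smul, Real.norm_eq_abs]

lemma l2_pos {n : ℕ} {x : Fin n → ℝ} (hx : x ≠ 0) : 0 < l2 x := by
  rw [l2_eq_norm, norm_pos_iff]
  exact fun h => hx (by simpa using congrArg WithLp.ofLp h)

lemma abs_l2_sub_l2_le {n : ℕ} (x y : Fin n → ℝ) : |l2 x - l2 y| ≤ l2 (x - y) := by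
  simpa only [l2_eq_norm, WithLp.toLp_sub] using abs_norm_sub_norm_le _ _

lemma sub_sign_mul_sq_and_abs_sign_mul {x m : ℝ} (hm : 0 ≤ m) (hx : x = 0 → m = 0) :
    (x - Real.sign x * m) ^ 2 = (|x| - m) ^ 2 ∧ |Real.sign x * m| = m := by
  rcases lt_trichotomy x 0 with h | rfl | h
  · simp only [Real.sign_of_neg h, abs_of_neg h, neg_one_mul, abs_neg, abs_of_nonneg hm]
    exact ⟨by ring, trivial⟩
  · simp [hx rfl]
  · simp [Real.sign_of_pos h, abs_of_pos h, abs_of_nonneg hm]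

/-- The contribution of an entry `U_j` with `|U_j| = a` to `F(b)` when `M‖b‖₂ = w`. -/
noncomputable def coordCost (lamb a w : ℝ) : ℝ :=
  (1 / 2) * (a - min w (st lamb a)) ^ 2 + lamb * min w (st lamb a)

lemma Ffun_eq {k K : ℕ} (lam lamb M : ℝ) (hM : 0 ≤ M) (v : Fin k → ℝ) (U : Fin K → ℝ)
    (b : Fin k → ℝ) :
    Ffun lam lamb M v U b
      = (1 / 2) * l2 (v - b) ^ 2 + lam * l2 b + ∑ j, coordCost lamb |U j| (M * l2 b) := by
  have hw : 0 ≤ M * l2 b := mul_nonneg hM (l2_nonneg b)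
  have hW : ∀ j, (U j - Wmap lamb M U b j) ^ 2 = (|U j| - min (M * l2 b) (st lamb |U j|)) ^ 2
      ∧ |Wmap lamb M U b j| = min (M * l2 b) (st lamb |U j|) := fun j =>
    sub_sign_mul_sq_and_abs_sign_mul (le_min hw (st_nonneg (abs_nonneg _))) (fun h => by simp [h, hw])
  simp only [Ffun, l1, coordCost, l2_sq, Pi.sub_apply, Finset.sum_add_distrib, ← Finset.mul_sum,
    (hW _).1, (hW _).2]
  ring

noncomputable def profile {k K : ℕ} (lam lamb M : ℝ) (v : Fin k → ℝ) (U : Fin K → ℝ)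
    (w : ℝ) : ℝ :=
  (1 / 2) * (l2 v - w / M) ^ 2 + lam * (w / M) + ∑ j, coordCost lamb |U j| w

lemma fmin_eq_profile {k K : ℕ} (lam lamb M : ℝ) (hM : 0 < M) (v : Fin k → ℝ) (hv : v ≠ 0)
    (U : Fin K → ℝ) {w : ℝ} (hw : 0 ≤ w) :
    fmin lam lamb M v U w = profile lam lamb M v U w := by
  have Ffun_of_mem : ∀ b, M * l2 b = w → Ffun lam lamb M v U b
      = (1 / 2) * l2 (v - b) ^ 2 + lam * (w / M) + ∑ j, coordCost lamb |U j| w := by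
    intro b hb
    rw [Ffun_eq lam lamb M hM.le v U b, hb, ← hb, mul_div_cancel_left₀ _ hM.ne']
  have hnorm : 0 < l2 v := l2_pos hv
  set c := w / (M * l2 v) with hc_def
  have hc : c * l2 v = w / M := by rw [hc_def]; field_simp
  have hbc : M * l2 (c • v) = w := by
    rw [l2_smul, abs_of_nonneg (by positivity), hc, mul_div_cancel₀ _ hM.ne']
  refine IsLeast.csInf_eq ⟨⟨c • v, hbc, ?_⟩, ?_⟩
  · rw [Ffun_of_mem _ hbc, profile, show v - c • v = (1 - c) • v by rw [sub_smul, one_smul],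
      l2_smul, mul_pow, sq_abs, ← hc]
    ring
  · rintro _ ⟨b, hb, rfl⟩
    have hb' : l2 b = w / M := by rw [eq_div_iff hM.ne', mul_comm]; exact hb
    rw [Ffun_of_mem b hb, profile, ← hb']
    have := abs_l2_sub_l2_le v b
    have : (l2 v - l2 b) ^ 2 ≤ l2 (v - b) ^ 2 := sq_le_sq' (abs_le.mp this).1 (abs_le.mp this).2
    linarith

section Sorted

variable {K : ℕ} (U : Fin K → ℝ) (σ : Equiv.Perm (Fin K))

lemma du_nonneg (t : ℕ) : 0 ≤ du U σ t := by
  unfold du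
  split
  · exact abs_nonneg _
  · exact le_rfl

lemma du_succ {i : ℕ} (hi : i < K) : du U σ (i + 1) = |U (σ ⟨i, hi⟩)| := by
  simp [du, hi]

variable {U σ}

lemma du_anti (hsort : ∀ i j : Fin K, i ≤ j → |U (σ j)| ≤ |U (σ i)|) {t t' : ℕ} (ht : 1 ≤ t)
    (htt' : t ≤ t') : du U σ t' ≤ du U σ t := by
  obtain ⟨i, rfl⟩ : ∃ i, t = i + 1 := ⟨t - 1, by omega⟩
  obtain ⟨j, rfl⟩ : ∃ j, t' = j + 1 := ⟨t' - 1, by omega⟩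
  by_cases hj : j < K
  · rw [du_succ U σ hj, du_succ U σ (by omega)]
    exact hsort ⟨i, by omega⟩ ⟨j, hj⟩ (Fin.mk_le_mk.mpr (by omega))
  · simpa [du, hj] using du_nonneg U σ (i + 1)

lemma st_du_anti (lamb : ℝ) (hsort : ∀ i j : Fin K, i ≤ j → |U (σ j)| ≤ |U (σ i)|) {t t' : ℕ}
    (ht : 1 ≤ t) (htt' : t ≤ t') : st lamb (du U σ t') ≤ st lamb (du U σ t) :=
  st_mono (du_nonneg U σ t') (du_anti hsort ht htt')

variable (σ)

lemma sum_abs_eq_sum_du (g : ℝ → ℝ) :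
    ∑ j, g |U j| = ∑ i ∈ Finset.Icc 1 K, g (du U σ i) := by
  rw [← Equiv.sum_comp σ, ← Finset.Ico_add_one_right_eq_Icc, ← Finset.sum_Ico_add' _ 0 K 1,
    ← Finset.range_eq_Ico, ← Fin.sum_univ_eq_sum_range]
  exact Finset.sum_congr rfl fun i _ => by rw [du_succ U σ i.isLt]

end Sorted

lemma coordCost_eq_of_st_le {lamb a w w' : ℝ} (h : st lamb a ≤ w) (hw : w ≤ w') :
    coordCost lamb a w' = coordCost lamb a w := by
  rw [coordCost, coordCost, min_eq_right h, min_eq_right (h.trans hw)]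

lemma coordCost_sub_of_le_st {lamb a w w' : ℝ} (hw : w ≤ w') (h : w' ≤ st lamb a) :
    coordCost lamb a w' - coordCost lamb a w = (w' - w) * ((w + w') / 2 - (a - lamb)) := by
  rw [coordCost, coordCost, min_eq_left h, min_eq_left (hw.trans h)]
  ring

lemma sum_coordCost_sub {K : ℕ} {U : Fin K → ℝ} (σ : Equiv.Perm (Fin K)) (lamb : ℝ)
    (hsort : ∀ i j : Fin K, i ≤ j → |U (σ j)| ≤ |U (σ i)|) {s : ℕ} (hsK : s ≤ K) {w w' : ℝ}
    (hlow : st lamb (du U σ (s + 1)) ≤ w) (hww' : w ≤ w')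
    (hup : 0 < s → w' < st lamb (du U σ s)) :
    ∑ j, coordCost lamb |U j| w' - ∑ j, coordCost lamb |U j| w
      = (w' - w) * (s * ((w + w') / 2) - ∑ i ∈ Finset.Icc 1 s, (du U σ i - lamb)) := by
  have Icc_one : ∀ n, Finset.Icc 1 n = Finset.Ioc 0 n := Finset.Icc_add_one_left_eq_Ioc 0
  rw [sum_abs_eq_sum_du σ (coordCost lamb · w'), sum_abs_eq_sum_du σ (coordCost lamb · w),
    ← Finset.sum_sub_distrib, Icc_one, Icc_one, ← Finset.sum_Ioc_consecutive _ (Nat.zero_le s) hsK]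
  have saturated : ∀ i ∈ Finset.Ioc s K,
      coordCost lamb (du U σ i) w' - coordCost lamb (du U σ i) w = 0 := fun i hi => by
    rw [Finset.mem_Ioc] at hi
    rw [sub_eq_zero,
      coordCost_eq_of_st_le ((st_du_anti lamb hsort (by omega) hi.1).trans hlow) hww']
  have active : ∀ i ∈ Finset.Ioc 0 s,
      coordCost lamb (du U σ i) w' - coordCost lamb (du U σ i) w
        = (w' - w) * ((w + w') / 2 - (du U σ i - lamb)) := fun i hi => by
    rw [Finset.mem_Ioc] at hi
    exact coordCost_sub_of_le_st hww'
      ((hup (by omega)).trans_le (st_du_anti lamb hsort hi.1 hi.2)).le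
  rw [Finset.sum_congr rfl saturated, Finset.sum_congr rfl active, Finset.sum_const_zero, add_zero,
    ← Finset.mul_sum, Finset.sum_sub_distrib, Finset.sum_const, Nat.card_Ioc, nsmul_eq_mul,
    Nat.sub_zero]

noncomputable def vertex {k K : ℕ} (lam lamb M : ℝ) (v : Fin k → ℝ) (U : Fin K → ℝ)
    (σ : Equiv.Perm (Fin K)) (s : ℕ) : ℝ :=
  M * (l2 v - aseq U σ lam lamb M s) / (1 + s * M ^ 2)

section Vertex

variable {k K : ℕ} (lam lamb M : ℝ) (v : Fin k → ℝ) (U : Fin K → ℝ) (σ : Equiv.Perm (Fin K))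

lemma profile_sub_profile (hM : M ≠ 0) (hsort : ∀ i j : Fin K, i ≤ j → |U (σ j)| ≤ |U (σ i)|)
    {s : ℕ} (hsK : s ≤ K) {w w' : ℝ} (hlow : st lamb (du U σ (s + 1)) ≤ w) (hww' : w ≤ w')
    (hup : 0 < s → w' < st lamb (du U σ s)) :
    profile lam lamb M v U w' - profile lam lamb M v U w
      = (w' - w) * ((1 + s * M ^ 2) / M ^ 2) * ((w + w') / 2 - vertex lam lamb M v U σ s) := by
  have hsum := sum_coordCost_sub σ lamb hsort hsK hlow hww' hup
  have hpos : 0 < 1 + (s : ℝ) * M ^ 2 := by positivity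
  simp only [profile, vertex, aseq] at hsum ⊢
  field_simp
  linear_combination 2 * M ^ 2 * hsum

lemma fmin_sub_fmin (hM : 0 < M) (hv : v ≠ 0)
    (hsort : ∀ i j : Fin K, i ≤ j → |U (σ j)| ≤ |U (σ i)|) {s : ℕ} (hsK : s ≤ K) {w w' : ℝ}
    (hlow : st lamb (du U σ (s + 1)) ≤ w) (hww' : w ≤ w')
    (hup : 0 < s → w' < st lamb (du U σ s)) (hw : 0 ≤ w) :
    fmin lam lamb M v U w' - fmin lam lamb M v U w
      = (w' - w) * ((1 + s * M ^ 2) / M ^ 2) * ((w + w') / 2 - vertex lam lamb M v U σ s) := by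
  rw [fmin_eq_profile lam lamb M hM v hv U hw, fmin_eq_profile lam lamb M hM v hv U (hw.trans hww'),
    profile_sub_profile lam lamb M v U σ hM.ne' hsort hsK hlow hww' hup]

lemma mul_l2_bvec (hM : 0 ≤ M) (hv : v ≠ 0) (s : ℕ) :
    M * l2 (bvec U σ lam lamb M v s) = max (vertex lam lamb M v U σ s) 0 := by
  have hnorm := l2_pos hv
  have hpos : 0 < 1 + (s : ℝ) * M ^ 2 := by positivity
  have hb : bvec U σ lam lamb M v s
      = ((1 / (1 + s * M ^ 2)) * max (1 - aseq U σ lam lamb M s / l2 v) 0) • v := rfl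
  have hmax : max (1 - aseq U σ lam lamb M s / l2 v) 0 * l2 v
      = max (l2 v - aseq U σ lam lamb M s) 0 := by
    rw [max_mul_of_nonneg _ _ hnorm.le, zero_mul, sub_mul, one_mul, div_mul_cancel₀ _ hnorm.ne']
  rw [hb, l2_smul, abs_of_nonneg (by positivity), mul_assoc (1 / _), hmax, vertex]
  rcases le_total (l2 v - aseq U σ lam lamb M s) 0 with h | h
  · rw [max_eq_right h, max_eq_right (div_nonpos_of_nonpos_of_nonneg
      (mul_nonpos_of_nonneg_of_nonpos hM h) hpos.le)]
    ring
  · rw [max_eq_left h, max_eq_left (div_nonneg (mul_nonneg hM h) hpos.le)]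
    ring

lemma aseq_succ (s : ℕ) :
    aseq U σ lam lamb M (s + 1) = aseq U σ lam lamb M s - M * (du U σ (s + 1) - lamb) := by
  rw [aseq, aseq, Finset.sum_Icc_succ_top (Nat.le_add_left 1 s)]
  ring

lemma vertex_succ (s : ℕ) :
    (1 + (s + 1 : ℕ) * M ^ 2) * (vertex lam lamb M v U σ (s + 1) - (du U σ (s + 1) - lamb))
      = (1 + s * M ^ 2) * (vertex lam lamb M v U σ s - (du U σ (s + 1) - lamb)) := by
  have : 0 < 1 + (s : ℝ) * M ^ 2 := by positivity
  have : 0 < 1 + ((s + 1 : ℕ) : ℝ) * M ^ 2 := by positivity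
  rw [vertex, vertex, aseq_succ]
  field_simp
  push_cast
  ring

end Vertex

section Monotonicity

variable {k K : ℕ} {lam lamb M : ℝ} {v : Fin k → ℝ} {U : Fin K → ℝ} {σ : Equiv.Perm (Fin K)}

lemma vertex_le_of_vertex_succ_le {s : ℕ}
    (h : vertex lam lamb M v U σ (s + 1) ≤ du U σ (s + 1) - lamb) :
    vertex lam lamb M v U σ s ≤ du U σ (s + 1) - lamb := by
  have key := vertex_succ lam lamb M v U σ s
  have : (1 + ((s + 1 : ℕ) : ℝ) * M ^ 2)
      * (vertex lam lamb M v U σ (s + 1) - (du U σ (s + 1) - lamb)) ≤ 0 :=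
    mul_nonpos_of_nonneg_of_nonpos (by positivity) (sub_nonpos.2 h)
  rw [key] at this
  exact sub_nonpos.1 (nonpos_of_mul_nonpos_right this (by positivity))

lemma le_vertex_succ_of_le_vertex {s : ℕ}
    (h : du U σ (s + 1) - lamb ≤ vertex lam lamb M v U σ s) :
    du U σ (s + 1) - lamb ≤ vertex lam lamb M v U σ (s + 1) := by
  have key := vertex_succ lam lamb M v U σ s
  have : 0 ≤ (1 + (s : ℝ) * M ^ 2) * (vertex lam lamb M v U σ s - (du U σ (s + 1) - lamb)) :=
    mul_nonneg (by positivity) (sub_nonneg.2 h)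
  rw [← key] at this
  exact sub_nonneg.1 (nonneg_of_mul_nonneg_right this (by positivity))

lemma vertex_le_st_succ_of_lt (hsort : ∀ i j : Fin K, i ≤ j → |U (σ j)| ≤ |U (σ i)|) {s : ℕ}
    (h : max (vertex lam lamb M v U σ s) 0 < st lamb (du U σ s)) {t : ℕ} (ht : t < s) :
    vertex lam lamb M v U σ t ≤ st lamb (du U σ (t + 1)) := by
  have step : ∀ j < s, vertex lam lamb M v U σ (j + 1) ≤ st lamb (du U σ (j + 1)) →
      vertex lam lamb M v U σ j ≤ st lamb (du U σ (j + 1)) := by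
    intro j hj hvj
    have hpos : 0 < st lamb (du U σ (j + 1)) :=
      ((le_max_right _ _).trans_lt h).trans_le (st_du_anti lamb hsort (by omega) hj)
    rw [st_eq_sub_of_pos (du_nonneg U σ _) hpos] at hvj ⊢
    exact vertex_le_of_vertex_succ_le hvj
  refine step t ht (Nat.decreasingInduction'
    (P := fun j => vertex lam lamb M v U σ j ≤ st lamb (du U σ j)) (fun j hjs htj hvj => ?_) ht
    ((le_max_left _ _).trans h.le))
  exact (step j hjs hvj).trans (st_du_anti lamb hsort (by omega) (by omega))

lemma st_le_vertex_of_lt (hsort : ∀ i j : Fin K, i ≤ j → |U (σ j)| ≤ |U (σ i)|) {s : ℕ}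
    (h : st lamb (du U σ (s + 1)) ≤ max (vertex lam lamb M v U σ s) 0) {t : ℕ} (hst : s < t)
    (ht : 0 < st lamb (du U σ t)) :
    st lamb (du U σ t) ≤ vertex lam lamb M v U σ t := by
  have step : ∀ j, 0 < st lamb (du U σ (j + 1)) →
      st lamb (du U σ (j + 1)) ≤ vertex lam lamb M v U σ j →
      st lamb (du U σ (j + 1)) ≤ vertex lam lamb M v U σ (j + 1) := by
    intro j hpos hvj
    rw [st_eq_sub_of_pos (du_nonneg U σ _) hpos] at hvj ⊢
    exact le_vertex_succ_of_le_vertex hvj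
  induction t, hst using Nat.le_induction with
  | base => exact step s ht ((le_max_iff.mp h).resolve_right ht.not_ge)
  | succ t hst ih =>
    have hanti := st_du_anti lamb hsort (by omega) (Nat.le_succ t)
    exact step t ht (hanti.trans (ih (ht.trans_le hanti)))

end Monotonicity

theorem stmt13_general (k K : ℕ)
    (lam lamb M : ℝ) (hM : 0 < M)
    (v : Fin k → ℝ) (hv : v ≠ 0) (U : Fin K → ℝ)
    (σ : Equiv.Perm (Fin K))
    (hsort : ∀ i j : Fin K, i ≤ j → |U (σ j)| ≤ |U (σ i)|)
    (sstar : ℕ)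
    (hcond : st lamb (du U σ (sstar + 1)) ≤ M * l2 (bvec U σ lam lamb M v sstar) ∧
      (0 < sstar → M * l2 (bvec U σ lam lamb M v sstar) < st lamb (du U σ sstar))) :
    ∀ s : ℕ, s ≤ K →
      (s < sstar →
        ∀ w w' : ℝ,
          (st lamb (du U σ (s + 1)) ≤ w ∧ (0 < s → w < st lamb (du U σ s)) ∧ 0 ≤ w) →
          (st lamb (du U σ (s + 1)) ≤ w' ∧ (0 < s → w' < st lamb (du U σ s)) ∧ 0 ≤ w') →
          w < w' → fmin lam lamb M v U w < fmin lam lamb M v U w') ∧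
      (sstar < s →
        ∀ w w' : ℝ,
          (st lamb (du U σ (s + 1)) ≤ w ∧ (0 < s → w < st lamb (du U σ s)) ∧ 0 ≤ w) →
          (st lamb (du U σ (s + 1)) ≤ w' ∧ (0 < s → w' < st lamb (du U σ s)) ∧ 0 ≤ w') →
          w < w' → fmin lam lamb M v U w' < fmin lam lamb M v U w) := by
  rw [mul_l2_bvec lam lamb M v U σ hM.le hv] at hcond
  intro s hsK
  have hfactor : ∀ {w w' : ℝ}, w < w' → 0 < (w' - w) * ((1 + s * M ^ 2) / M ^ 2) :=
    fun hww' => mul_pos (sub_pos.2 hww') (by positivity)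
  refine ⟨fun hlt w w' hw hw' hww' => ?_, fun hgt w w' hw hw' hww' => ?_⟩
  · have hvertex := vertex_le_st_succ_of_lt hsort (hcond.2 (by omega)) hlt
    rw [← sub_pos, fmin_sub_fmin lam lamb M v U σ hM hv hsort hsK hw.1 hww'.le hw'.2.1 hw.2.2]
    exact mul_pos (hfactor hww') (by linarith [hw.1])
  · have hw's := hw'.2.1 (by omega)
    have hvertex := st_le_vertex_of_lt hsort hcond.1 hgt (hw'.2.2.trans_lt hw's)
    rw [← sub_neg, fmin_sub_fmin lam lamb M v U σ hM hv hsort hsK hw.1 hww'.le hw'.2.1 hw.2.2]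
    exact mul_neg_of_pos_of_neg (hfactor hww') (by linarith)

/-- Assume `v ≠ 0` and let `s*` be the unique index in `{0,…,K}` with
`S_λ̄(|U_(s*+1)|) ≤ M‖b_{s*}‖₂ < S_λ̄(|U_(s*)|)`. Then for every `s ∈ {0,…,K}`:
if `s < s*`, `f` is strictly increasing on `[S_λ̄(|U_(s+1)|), S_λ̄(|U_(s)|)) ∩ [0,∞)`
(the upper bound being `+∞` when `s = 0`), and if `s > s*`, `f` is strictly decreasing
on that set. -/
theorem stmt13 (k K : ℕ) (hk : 1 ≤ k) (hK : 1 ≤ K)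
    (lam lamb M : ℝ) (hlam : 0 ≤ lam) (hlamb : 0 ≤ lamb) (hM : 0 < M)
    (v : Fin k → ℝ) (hv : v ≠ 0) (U : Fin K → ℝ)
    (σ : Equiv.Perm (Fin K))
    (hsort : ∀ i j : Fin K, i ≤ j → |U (σ j)| ≤ |U (σ i)|)
    (sstar : ℕ) (hss : sstar ≤ K)
    (hcond : st lamb (du U σ (sstar + 1)) ≤ M * l2 (bvec U σ lam lamb M v sstar) ∧
      (0 < sstar → M * l2 (bvec U σ lam lamb M v sstar) < st lamb (du U σ sstar)))
    (huniq : ∀ s : ℕ, s ≤ K →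
      (st lamb (du U σ (s + 1)) ≤ M * l2 (bvec U σ lam lamb M v s) ∧
        (0 < s → M * l2 (bvec U σ lam lamb M v s) < st lamb (du U σ s))) →
      s = sstar) :
    ∀ s : ℕ, s ≤ K →
      (s < sstar →
        ∀ w w' : ℝ,
          (st lamb (du U σ (s + 1)) ≤ w ∧ (0 < s → w < st lamb (du U σ s)) ∧ 0 ≤ w) →
          (st lamb (du U σ (s + 1)) ≤ w' ∧ (0 < s → w' < st lamb (du U σ s)) ∧ 0 ≤ w') →
          w < w' → fmin lam lamb M v U w < fmin lam lamb M v U w') ∧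
      (sstar < s →
        ∀ w w' : ℝ,
          (st lamb (du U σ (s + 1)) ≤ w ∧ (0 < s → w < st lamb (du U σ s)) ∧ 0 ≤ w) →
          (st lamb (du U σ (s + 1)) ≤ w' ∧ (0 < s → w' < st lamb (du U σ s)) ∧ 0 ≤ w') →
          w < w' → fmin lam lamb M v U w' < fmin lam lamb M v U w) :=
  stmt13_general k K lam lamb M hM v hv U σ hsort sstar hcond
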